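/- arXiv:2002.02873 — 3 statements merged into one kernel-verified Lean document; each statement's English description precedes it below -/
import Mathlib

section
/- In a real Hilbert space, suppose f is L-smooth and gradients are bounded by M: ‖∇f(x)‖ ≤ M and ‖g‖ ≤ M for the sample gradient g at y. If x_k = x_{k-1} - γ g and y = (1-α)x̄ + α x_{k-1}, then f(x_k) ≤ f(x_{k-1}) - γ(1 - Lγ)‖∇f(y)‖² + (L(1-α)²/2)‖x_{k-1} - x̄‖² - γ⟨∇f(x_{k-1}) - Lγ∇f(y), g - ∇f(y)⟩ + 2M²Lγ². -/
open scoped RealInnerProductSpace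

/-!
Apply the descent inequality of `f` along the step `xk - xprev = -γ g`. Comparing with the claimed
bound leaves three error terms: `γ ⟪∇f(y) - ∇f(xprev), ∇f(y)⟫`, which Lipschitz continuity and
Young's inequality split into `L/2 ‖y - xprev‖² + L γ² M²/2` with `‖y - xprev‖ = |1 - α| ‖xprev - x̄‖`;
the cross term `-L γ² ⟪∇f(y), g⟫ ≤ L γ² M²`; and the quadratic term `L γ²/2 ‖g‖² ≤ L γ² M²/2`.
-/

section

variable {H : Type*} [NormedAddCommGroup H] [InnerProductSpace ℝ H]

lemma apply_sub_smul_le_of_upper_quadratic {f : H → ℝ} {gf : H → H} {L : ℝ}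
    (hsmooth : ∀ x y : H, f y ≤ f x + ⟪gf x, y - x⟫ + L / 2 * ‖y - x‖ ^ 2) (γ : ℝ) (x g : H) :
    f (x - γ • g) ≤ f x - γ * ⟪gf x, g⟫ + L / 2 * γ ^ 2 * ‖g‖ ^ 2 := by
  have hstep : x - γ • g - x = -(γ • g) := by abel
  have h := hsmooth x (x - γ • g)
  rw [hstep, inner_neg_right, real_inner_smul_right, norm_neg, norm_smul, mul_pow,
    Real.norm_eq_abs, sq_abs] at h
  linarith

lemma abs_real_inner_le_sq_of_norm_le {u v : H} {M : ℝ} (hu : ‖u‖ ≤ M) (hv : ‖v‖ ≤ M) :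
    |⟪u, v⟫| ≤ M ^ 2 :=
  calc |⟪u, v⟫| ≤ ‖u‖ * ‖v‖ := abs_real_inner_le_norm u v
    _ ≤ M * M := mul_le_mul hu hv (norm_nonneg v) ((norm_nonneg u).trans hu)
    _ = M ^ 2 := (sq M).symm

lemma mul_real_inner_le_of_norm_le {u w : H} {γ L r M : ℝ} (hL : 0 ≤ L)
    (hu : ‖u‖ ≤ L * r) (hw : ‖w‖ ≤ M) :
    γ * ⟪u, w⟫ ≤ L / 2 * r ^ 2 + L * γ ^ 2 * M ^ 2 / 2 := by
  have hCS : γ * ⟪u, w⟫ ≤ |γ| * ((L * r) * M) :=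
    calc γ * ⟪u, w⟫ ≤ |γ * ⟪u, w⟫| := le_abs_self _
      _ = |γ| * |⟪u, w⟫| := abs_mul γ _
      _ ≤ |γ| * (‖u‖ * ‖w‖) := by gcongr; exact abs_real_inner_le_norm u w
      _ ≤ |γ| * ((L * r) * M) := mul_le_mul_of_nonneg_left
        (mul_le_mul hu hw (norm_nonneg w) ((norm_nonneg u).trans hu)) (abs_nonneg γ)
  -- Young's inequality `|γ| r M ≤ r²/2 + γ² M²/2`, scaled by `L`.
  have hyoung := mul_nonneg hL (sq_nonneg (r - |γ| * M))
  rw [sub_sq, mul_pow, sq_abs] at hyoung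
  linarith

lemma norm_convex_comb_sub_right (α : ℝ) (a b : H) :
    ‖((1 - α) • a + α • b) - b‖ = |1 - α| * ‖b - a‖ := by
  rw [show ((1 - α) • a + α • b) - b = (1 - α) • (a - b) by module, norm_smul,
    Real.norm_eq_abs, norm_sub_rev]

end

theorem stmt_6_general {H : Type*} [NormedAddCommGroup H] [InnerProductSpace ℝ H]
    (f : H → ℝ) (gf : H → H) (L M γ α : ℝ) (hL : 0 < L)
    (hlip : ∀ x y : H, ‖gf x - gf y‖ ≤ L * ‖x - y‖)
    (hsmooth : ∀ x y : H, f y ≤ f x + ⟪gf x, y - x⟫ + L / 2 * ‖y - x‖ ^ 2)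
    (hbd : ∀ x : H, ‖gf x‖ ≤ M)
    (xprev xbar g : H) (hg : ‖g‖ ≤ M)
    (y xk : H) (hy : y = (1 - α) • xbar + α • xprev)
    (hupd : xk = xprev - γ • g) :
    f xk ≤ f xprev - γ * (1 - L * γ) * ‖gf y‖ ^ 2
      + L * (1 - α) ^ 2 / 2 * ‖xprev - xbar‖ ^ 2
      - γ * ⟪gf xprev - (L * γ) • gf y, g - gf y⟫
      + 2 * M ^ 2 * L * γ ^ 2 := by
  have hdescent := hupd ▸ apply_sub_smul_le_of_upper_quadratic hsmooth γ xprev g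
  have hdist : ‖y - xprev‖ = |1 - α| * ‖xprev - xbar‖ := by
    rw [hy]; exact norm_convex_comb_sub_right α xbar xprev
  have hgrad : γ * ⟪gf y - gf xprev, gf y⟫
      ≤ L / 2 * (|1 - α| * ‖xprev - xbar‖) ^ 2 + L * γ ^ 2 * M ^ 2 / 2 :=
    mul_real_inner_le_of_norm_le hL.le (hdist ▸ hlip y xprev) (hbd y)
  have hcross := neg_le_of_abs_le (abs_real_inner_le_sq_of_norm_le (hbd y) hg)
  have hsq : ‖g‖ ^ 2 ≤ M ^ 2 := pow_le_pow_left₀ (norm_nonneg g) hg 2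
  have hexpand : ⟪gf xprev - (L * γ) • gf y, g - gf y⟫
      = ⟪gf xprev, g⟫ + ⟪gf y - gf xprev, gf y⟫ - L * γ * ⟪gf y, g⟫
        + (L * γ - 1) * ‖gf y‖ ^ 2 := by
    simp only [inner_sub_left, inner_sub_right, real_inner_smul_left,
      real_inner_self_eq_norm_sq]
    ring
  rw [mul_pow, sq_abs] at hgrad
  rw [hexpand]
  linarith [mul_le_mul_of_nonneg_left hcross (by positivity : 0 ≤ L * γ ^ 2),
    mul_le_mul_of_nonneg_left hsq (by positivity : 0 ≤ L * γ ^ 2)]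

theorem stmt_6 {H : Type*} [NormedAddCommGroup H] [InnerProductSpace ℝ H]
    (f : H → ℝ) (gf : H → H) (L M γ α : ℝ) (hL : 0 < L) (hγ : 0 < γ)
    (hα : 0 ≤ α ∧ α ≤ 1)
    (hlip : ∀ x y : H, ‖gf x - gf y‖ ≤ L * ‖x - y‖)
    (hsmooth : ∀ x y : H, f y ≤ f x + ⟪gf x, y - x⟫ + L / 2 * ‖y - x‖ ^ 2)
    (hbd : ∀ x : H, ‖gf x‖ ≤ M)
    (xprev xbar g : H) (hg : ‖g‖ ≤ M)
    (y xk : H) (hy : y = (1 - α) • xbar + α • xprev)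
    (hupd : xk = xprev - γ • g) :
    f xk ≤ f xprev - γ * (1 - L * γ) * ‖gf y‖ ^ 2
      + L * (1 - α) ^ 2 / 2 * ‖xprev - xbar‖ ^ 2
      - γ * ⟪gf xprev - (L * γ) • gf y, g - gf y⟫
      + 2 * M ^ 2 * L * γ ^ 2 :=
  stmt_6_general f gf L M γ α hL hlip hsmooth hbd xprev xbar g hg y xk hy hupd
end

section
/- Under the recursion x̄_k - x_k = Γ_k ∑_{t=1}^{k} ((γ_t - β_t)/Γ_t) g_t with ‖g_t‖ ≤ M, α_t ∈ (0,1], α_1 = 1, γ_t ≥ β_t, and ∑_{t=1}^{k} α_t/Γ_t = 1/Γ_k, one has ‖x̄_k - x_k‖² ≤ M² Γ_k ∑_{t=1}^{k} (γ_t - β_t)²/(Γ_t α_t). -/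
/-!
With the weights `w t = α t / Γ t`, which sum to `1 / Γ k`, the weighted Cauchy–Schwarz
inequality `‖∑ v t‖² ≤ (∑ w t) * ∑ ‖v t‖² / w t` (Jensen for `‖·‖²`) applied to
`v t = ((γ t - β t) / Γ t) • g t` gives the bound after multiplying by `Γ k ^ 2`.
-/

open Finset

theorem norm_sum_sq_le_sum_mul_sum_norm_sq_div {ι E : Type*} [SeminormedAddCommGroup E]
    (s : Finset ι) (v : ι → E) {w : ι → ℝ} (hw : ∀ i ∈ s, 0 < w i) :
    ‖∑ i ∈ s, v i‖ ^ 2 ≤ (∑ i ∈ s, w i) * ∑ i ∈ s, ‖v i‖ ^ 2 / w i :=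
  calc ‖∑ i ∈ s, v i‖ ^ 2 ≤ (∑ i ∈ s, ‖v i‖) ^ 2 := by gcongr; exact norm_sum_le _ _
    _ ≤ _ := sum_sq_le_sum_mul_sum_of_sq_le_mul s (fun i hi => (hw i hi).le)
      (fun i hi => div_nonneg (sq_nonneg _) (hw i hi).le)
      (fun i hi => (mul_div_cancel₀ _ (hw i hi).ne').ge)

theorem stmt_8_general {H : Type*} [NormedAddCommGroup H] [InnerProductSpace ℝ H]
    (g : ℕ → H) (α γ β Γ : ℕ → ℝ) (M : ℝ)
    (k : ℕ)
    (hΓpos : ∀ t, 1 ≤ t → 0 < Γ t)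
    (hα : ∀ t, 1 ≤ t → 0 < α t ∧ α t ≤ 1)
    (hg : ∀ t, 1 ≤ t → ‖g t‖ ≤ M)
    (hsum : ∑ t ∈ Finset.Icc 1 k, α t / Γ t = 1 / Γ k)
    (xbk xk : H)
    (heq : xbk - xk = Γ k • ∑ t ∈ Finset.Icc 1 k, ((γ t - β t) / Γ t) • g t) :
    ‖xbk - xk‖ ^ 2 ≤ M ^ 2 * Γ k * ∑ t ∈ Finset.Icc 1 k,
      (γ t - β t) ^ 2 / (Γ t * α t) := by
  have hw : ∀ t ∈ Icc 1 k, 0 < α t / Γ t := fun t ht =>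
    div_pos (hα t (mem_Icc.1 ht).1).1 (hΓpos t (mem_Icc.1 ht).1)
  have hΓk : 0 ≤ Γ k := one_div_nonneg.1 (hsum ▸ sum_nonneg fun t ht => (hw t ht).le)
  rw [heq, norm_smul, mul_pow, Real.norm_eq_abs, sq_abs]
  calc Γ k ^ 2 * ‖∑ t ∈ Icc 1 k, ((γ t - β t) / Γ t) • g t‖ ^ 2
      ≤ Γ k ^ 2 * ((∑ t ∈ Icc 1 k, α t / Γ t) *
          ∑ t ∈ Icc 1 k, ‖((γ t - β t) / Γ t) • g t‖ ^ 2 / (α t / Γ t)) := by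
        gcongr; exact norm_sum_sq_le_sum_mul_sum_norm_sq_div _ _ hw
    _ = Γ k * ∑ t ∈ Icc 1 k, ‖g t‖ ^ 2 * ((γ t - β t) ^ 2 / (Γ t * α t)) := by
        rw [hsum, one_div, ← mul_assoc, sq, mul_self_mul_inv]
        congr 1
        refine sum_congr rfl fun t ht => ?_
        have hΓt := (hΓpos t (mem_Icc.1 ht).1).ne'
        have hαt := (hα t (mem_Icc.1 ht).1).1.ne'
        rw [norm_smul, mul_pow, Real.norm_eq_abs, sq_abs]
        field_simp
    _ ≤ M ^ 2 * Γ k * ∑ t ∈ Icc 1 k, (γ t - β t) ^ 2 / (Γ t * α t) := by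
        rw [mul_comm (M ^ 2), mul_assoc, mul_sum (s := Icc 1 k) (a := M ^ 2)]
        gcongr with t ht
        · have ht1 := (mem_Icc.1 ht).1
          exact div_nonneg (sq_nonneg _) (mul_pos (hΓpos t ht1) (hα t ht1).1).le
        · exact hg t (mem_Icc.1 ht).1

theorem stmt_8 {H : Type*} [NormedAddCommGroup H] [InnerProductSpace ℝ H]
    (g : ℕ → H) (α γ β Γ : ℕ → ℝ) (M : ℝ) (hM : 0 ≤ M)
    (k : ℕ) (hk : 1 ≤ k)
    (hΓpos : ∀ t, 1 ≤ t → 0 < Γ t)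
    (hα : ∀ t, 1 ≤ t → 0 < α t ∧ α t ≤ 1) (hα1 : α 1 = 1)
    (hγβ : ∀ t, 1 ≤ t → β t ≤ γ t)
    (hg : ∀ t, 1 ≤ t → ‖g t‖ ≤ M)
    (hsum : ∑ t ∈ Finset.Icc 1 k, α t / Γ t = 1 / Γ k)
    (xbk xk : H)
    (heq : xbk - xk = Γ k • ∑ t ∈ Finset.Icc 1 k, ((γ t - β t) / Γ t) • g t) :
    ‖xbk - xk‖ ^ 2 ≤ M ^ 2 * Γ k * ∑ t ∈ Finset.Icc 1 k,
      (γ t - β t) ^ 2 / (Γ t * α t) :=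
  stmt_8_general g α γ β Γ M k hΓpos hα hg hsum xbk xk heq
end

section
/- In a real Hilbert space, let x_k = argmin_{x∈X} { γ[⟨g, x - y⟩ + (μ/2)‖x - y‖²] + (1/2)‖x - x_{k-1}‖² } over a closed convex set X with ‖g‖ ≤ M and ‖x - y‖ ≤ 2D for all x ∈ X. Then ‖x_k - x_{k-1}‖ ≤ (M + 2Dμ)γ. -/
open scoped RealInnerProductSpace

/-! The first-order optimality condition of the prox subproblem at `x_k`, tested in the direction
`x_{k-1} - x_k`, gives `‖x_k - x_{k-1}‖² ≤ ⟪γ g + γ μ (x_k - y), x_{k-1} - x_k⟫`. By Cauchy–Schwarz the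
step is then at most `‖γ g + γ μ (x_k - y)‖ ≤ γ (M + 2 D μ)`. -/

section
variable {E : Type*} [NormedAddCommGroup E] [InnerProductSpace ℝ E]

theorem Convex.inner_sub_nonneg_of_isMinOn {f : E → ℝ} {s : Set E} {a v x : E}
    (hs : Convex ℝ s) (hf : HasFDerivAt f (innerSL ℝ v) a) (hmin : IsMinOn f s a)
    (ha : a ∈ s) (hx : x ∈ s) : 0 ≤ ⟪v, x - a⟫ :=
  hmin.localize.hasFDerivWithinAt_nonneg hf.hasFDerivWithinAt
    (sub_mem_posTangentConeAt_of_segment_subset (hs.segment_subset ha hx))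

theorem hasFDerivAt_prox_objective (γ μ : ℝ) (g y z a : E) :
    HasFDerivAt (fun x ↦ γ * (⟪g, x - y⟫ + μ / 2 * ‖x - y‖ ^ 2) + 1 / 2 * ‖x - z‖ ^ 2)
      (innerSL ℝ (γ • g + (γ * μ) • (a - y) + (a - z))) a := by
  have hy := (hasFDerivAt_id (𝕜 := ℝ) a).sub_const y
  have hz := (hasFDerivAt_id (𝕜 := ℝ) a).sub_const z
  refine ((((hasFDerivAt_const g a).inner ℝ hy).add (hy.norm_sq.const_mul (μ / 2))).const_mul γ
    |>.add (hz.norm_sq.const_mul (1 / 2))).congr_fderiv ?_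
  ext w
  simp [← mul_assoc]

theorem norm_sub_le_of_inner_add_sub_nonneg {w a z : E} (h : 0 ≤ ⟪w + (a - z), z - a⟫) :
    ‖a - z‖ ≤ ‖w‖ := by
  have hsq : ‖z - a‖ ^ 2 ≤ ‖w‖ * ‖z - a‖ := by
    have : ⟪a - z, z - a⟫ = -‖z - a‖ ^ 2 := by
      rw [← neg_sub, inner_neg_left, real_inner_self_eq_norm_sq]
    rw [inner_add_left, this] at h
    linarith [real_inner_le_norm w (z - a)]
  rw [norm_sub_rev]
  nlinarith [norm_nonneg (z - a), norm_nonneg w]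

end

theorem stmt_13_general {H : Type*} [NormedAddCommGroup H] [InnerProductSpace ℝ H]
    (X : Set H) (hXconv : Convex ℝ X)
    (xprev y g xk : H) (hxprev : xprev ∈ X) (hxk : xk ∈ X)
    (M D μ γ : ℝ) (hμ : 0 ≤ μ) (hγ : 0 < γ) (hg : ‖g‖ ≤ M)
    (hdiam : ∀ x ∈ X, ‖x - y‖ ≤ 2 * D)
    (hmin : ∀ x ∈ X,
      γ * (⟪g, xk - y⟫ + μ / 2 * ‖xk - y‖ ^ 2) + (1 / 2) * ‖xk - xprev‖ ^ 2 ≤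
      γ * (⟪g, x - y⟫ + μ / 2 * ‖x - y‖ ^ 2) + (1 / 2) * ‖x - xprev‖ ^ 2) :
    ‖xk - xprev‖ ≤ (M + 2 * D * μ) * γ := by
  have hopt : 0 ≤ ⟪γ • g + (γ * μ) • (xk - y) + (xk - xprev), xprev - xk⟫ :=
    hXconv.inner_sub_nonneg_of_isMinOn (hasFDerivAt_prox_objective γ μ g y xprev xk) hmin
      hxk hxprev
  calc ‖xk - xprev‖ ≤ ‖γ • g + (γ * μ) • (xk - y)‖ := norm_sub_le_of_inner_add_sub_nonneg hopt
    _ ≤ γ * ‖g‖ + γ * μ * ‖xk - y‖ := by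
      refine (norm_add_le _ _).trans_eq ?_
      rw [norm_smul, norm_smul, Real.norm_of_nonneg hγ.le,
        Real.norm_of_nonneg (mul_nonneg hγ.le hμ)]
    _ ≤ γ * M + γ * μ * (2 * D) := by
      gcongr
      exact hdiam xk hxk
    _ = (M + 2 * D * μ) * γ := by ring

theorem stmt_13 {H : Type*} [NormedAddCommGroup H] [InnerProductSpace ℝ H]
    (X : Set H) (hXc : IsClosed X) (hXconv : Convex ℝ X)
    (xprev y g xk : H) (hxprev : xprev ∈ X) (hy : y ∈ X) (hxk : xk ∈ X)
    (M D μ γ : ℝ) (hμ : 0 ≤ μ) (hγ : 0 < γ) (hg : ‖g‖ ≤ M)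
    (hdiam : ∀ x ∈ X, ‖x - y‖ ≤ 2 * D)
    (hmin : ∀ x ∈ X,
      γ * (⟪g, xk - y⟫ + μ / 2 * ‖xk - y‖ ^ 2) + (1 / 2) * ‖xk - xprev‖ ^ 2 ≤
      γ * (⟪g, x - y⟫ + μ / 2 * ‖x - y‖ ^ 2) + (1 / 2) * ‖x - xprev‖ ^ 2) :
    ‖xk - xprev‖ ≤ (M + 2 * D * μ) * γ :=
  stmt_13_general X hXconv xprev y g xk hxprev hxk M D μ γ hμ hγ hg hdiam hmin
end
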